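/- Let n ∈ ℕ, b ∈ K, and define G(x,y) = -y·(n-1)!·Σ_{ν=0}^{n-1} (-1)^{n+ν} (n+b-ν+1)_ν x^ν/ν! + (b+1)_n x^n. Then x(1-x)·∂G/∂x + y(n + b x + y)·∂G/∂y = (n - n x + y)·G, i.e., {G = 0} is an invariant algebraic curve of the system ẋ = x(1-x), ẏ = y(n + b x + y), with cofactor n - n x + y. -/

import Mathlib

open MvPolynomial

/-- Pochhammer symbol `(c)_n = c(c+1)⋯(c+n-1)`. -/
noncomputable def poch (c : ℝ) (n : ℕ) : ℝ := ∏ i ∈ Finset.range n, (c + i)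

/-- The polynomial `F(x,y) = y (n-1)! Σ_{ν=0}^{n-1} (-1)^{n+ν} (n+b-ν+1)_ν x^ν/ν! + (b+1)_n x^n`,
with `x = X 0`, `y = X 1`. -/
noncomputable def LVF (n : ℕ) (b : ℝ) : MvPolynomial (Fin 2) ℝ :=
  C ((Nat.factorial (n - 1) : ℝ)) * X 1 *
      ∑ ν ∈ Finset.range n,
        C ((-1) ^ (n + ν) * poch ((n : ℝ) + b - ν + 1) ν / (Nat.factorial ν : ℝ)) * X 0 ^ ν
    + C (poch (b + 1) n) * X 0 ^ n

/-- The polynomial `G` of Proposition 3 (sign-flipped `y`-part of `F`). -/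
noncomputable def LVG (n : ℕ) (b : ℝ) : MvPolynomial (Fin 2) ℝ :=
  -(C ((Nat.factorial (n - 1) : ℝ)) * X 1 *
      ∑ ν ∈ Finset.range n,
        C ((-1) ^ (n + ν) * poch ((n : ℝ) + b - ν + 1) ν / (Nat.factorial ν : ℝ)) * X 0 ^ ν)
    + C (poch (b + 1) n) * X 0 ^ n


/-!
Write `G = -(n-1)! · y · S(x) + (b+1)_n x^n`. Since `S` does not involve `y`, the invariance
identity minus its right-hand side equals `-y` times
`(n-1)! (x(1-x) S' + (b+n) x S) + (b+1)_n x^n`, a polynomial in `x` alone. The coefficients `a_ν`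
of `S` satisfy `(ν+1) a_{ν+1} + (b+n-ν) a_ν = 0`, so `x(1-x) S' + (b+n) x S` telescopes to its
top term `(b+1) a_{n-1} x^n`, and `(n-1)! (b+1) a_{n-1} = -(b+1)_n`.
-/

namespace MvPolynomial

variable {R σ : Type*} [CommRing R]

theorem pderiv_X_pow_succ (i : σ) (k : ℕ) :
    pderiv i (X i ^ (k + 1) : MvPolynomial σ R) = ((k : MvPolynomial σ R) + 1) * X i ^ k := by
  rw [pderiv_pow, pderiv_X_self, mul_one, Nat.add_sub_cancel, Nat.cast_succ]

theorem pderiv_sum_C_mul_X_pow_of_ne {i j : σ} (h : i ≠ j) (a : ℕ → R) (s : Finset ℕ) :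
    pderiv j (∑ ν ∈ s, C (a ν) * X i ^ ν) = 0 := by
  rw [map_sum]
  exact Finset.sum_eq_zero fun ν _ => by simp [h]

theorem X_mul_one_sub_X_mul_pderiv_sum_add_of_recurrence (i : σ) (a : ℕ → R) (c : R) (m : ℕ)
    (h : ∀ ν < m, (ν + 1) * a (ν + 1) + (c - ν) * a ν = 0) :
    X i * (1 - X i) * pderiv i (∑ ν ∈ Finset.range (m + 1), C (a ν) * X i ^ ν)
        + C c * X i * ∑ ν ∈ Finset.range (m + 1), C (a ν) * X i ^ ν =
      C ((c - m) * a m) * X i ^ (m + 1) := by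
  induction m with
  | zero => simp; ring
  | succ m ih =>
    have hm := congrArg (C : R → MvPolynomial σ R) (h m m.lt_succ_self)
    have ih' := ih fun ν hν => h ν (hν.trans m.lt_succ_self)
    rw [Finset.sum_range_succ, map_add, pderiv_C_mul, pderiv_X_pow_succ]
    simp only [map_mul, map_sub, map_add, map_natCast, map_one, map_zero] at ih' hm ⊢
    push_cast
    linear_combination ih' + (X i ^ (m + 1) : MvPolynomial σ R) * hm

end MvPolynomial

open Nat

theorem poch_succ (c : ℝ) (k : ℕ) : poch c (k + 1) = c * poch (c + 1) k := by
  unfold poch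
  rw [Finset.prod_range_succ', Nat.cast_zero, add_zero, mul_comm]
  congr 1
  exact Finset.prod_congr rfl fun i _ => by push_cast; ring

/-- The coefficient of `x ^ ν` in the `y`-part of `LVG n b`, up to the factor `-(n-1)!`. -/
noncomputable def lvCoeff (n : ℕ) (b : ℝ) (ν : ℕ) : ℝ :=
  (-1) ^ (n + ν) * poch ((n : ℝ) + b - ν + 1) ν / ν !

theorem lvCoeff_recurrence (n : ℕ) (b : ℝ) (ν : ℕ) :
    (ν + 1) * lvCoeff n b (ν + 1) + (b + n - ν) * lvCoeff n b ν = 0 := by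
  have hshift : (n : ℝ) + b - (ν + 1 : ℕ) + 1 = n + b - ν := by push_cast; ring
  rw [lvCoeff, lvCoeff, hshift, poch_succ, ← add_assoc, pow_succ, factorial_succ]
  field_simp
  push_cast
  ring

theorem factorial_mul_lvCoeff_top (m : ℕ) (b : ℝ) :
    m ! * ((b + (m + 1 : ℕ) - m) * lvCoeff (m + 1) b m) = -poch (b + 1) (m + 1) := by
  have hshift : ((m + 1 : ℕ) : ℝ) + b - m + 1 = b + 1 + 1 := by push_cast; ring
  have hsign : (-1 : ℝ) ^ (m + 1 + m) = -1 := by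
    rw [show m + 1 + m = 2 * m + 1 by ring, pow_succ, pow_mul]
    norm_num
  rw [lvCoeff, hshift, hsign, poch_succ (b + 1) m]
  field_simp
  push_cast
  ring

/-- `{G = 0}` is an invariant algebraic curve of `ẋ = x(1-x)`, `ẏ = y(n+bx+y)`,
with cofactor `n - nx + y`. -/
theorem LVG_invariant (n : ℕ) (b : ℝ) (hn : 1 ≤ n) :
    X 0 * (1 - X 0) * pderiv (0 : Fin 2) (LVG n b)
        + X 1 * (C (n : ℝ) + C b * X 0 + X 1) * pderiv (1 : Fin 2) (LVG n b) =
      (C (n : ℝ) - C (n : ℝ) * X 0 + X 1) * LVG n b := by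
  obtain ⟨m, rfl⟩ := Nat.exists_eq_add_of_le' hn
  have htelescope := X_mul_one_sub_X_mul_pderiv_sum_add_of_recurrence (0 : Fin 2)
    (lvCoeff (m + 1) b) (b + (m + 1 : ℕ)) m fun ν _ => lvCoeff_recurrence (m + 1) b ν
  have htop := congrArg (C : ℝ → MvPolynomial (Fin 2) ℝ) (factorial_mul_lvCoeff_top m b)
  set S : MvPolynomial (Fin 2) ℝ :=
    ∑ ν ∈ Finset.range (m + 1), C (lvCoeff (m + 1) b ν) * X 0 ^ ν
  have hG : LVG (m + 1) b = -(C (m ! : ℝ) * X 1 * S) + C (poch (b + 1) (m + 1)) * X 0 ^ (m + 1) :=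
    rfl
  have hS : pderiv 1 S = 0 := pderiv_sum_C_mul_X_pow_of_ne (by decide) _ _
  have hx : pderiv 1 (X 0 ^ (m + 1) : MvPolynomial (Fin 2) ℝ) = 0 := by simp
  rw [hG]
  simp only [map_add, map_neg, Derivation.leibniz, pderiv_C, pderiv_X_self, pderiv_X_pow_succ, hS,
    hx, pderiv_X_of_ne (by decide : (1 : Fin 2) ≠ 0), smul_eq_mul, mul_zero, mul_one, add_zero]
  simp only [map_mul, map_sub, map_add, map_neg, map_natCast] at htelescope htop ⊢
  push_cast at htelescope htop ⊢
  linear_combination (-X 1 * (m ! : MvPolynomial (Fin 2) ℝ)) * htelescope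
    - X 1 * X 0 ^ (m + 1) * htop
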